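/- Let T, S ∈ B_A(H). Then max{‖T+S‖_A², ‖T−S‖_A²} ≥ | ‖T+S‖_A² − ‖T−S‖_A² |/2 + max{ ‖T² + S²‖_A, ‖T^{♯_A}T + S^{♯_A}S‖_A, ‖TT^{♯_A} + SS^{♯_A}‖_A }. -/

import Mathlib

open ContinuousLinearMap

/-- The `A`-seminorm of a vector: `‖x‖_A = √⟨Ax, x⟩`. -/
noncomputable def vnormA {H : Type*} [NormedAddCommGroup H] [InnerProductSpace ℂ H]
    (A : H →L[ℂ] H) (x : H) : ℝ :=
  Real.sqrt (RCLike.re (inner ℂ (A x) x : ℂ))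

/-- `T` is `A`-bounded, i.e. `T ∈ B_{A^{1/2}}(H)`. -/
def ABounded {H : Type*} [NormedAddCommGroup H] [InnerProductSpace ℂ H]
    (A T : H →L[ℂ] H) : Prop :=
  ∃ c : ℝ, 0 < c ∧ ∀ x, vnormA A (T x) ≤ c * vnormA A x

/-- The `A`-operator seminorm `‖T‖_A = sup{‖Tx‖_A : ‖x‖_A = 1}`. -/
noncomputable def opNormA {H : Type*} [NormedAddCommGroup H] [InnerProductSpace ℂ H]
    (A T : H →L[ℂ] H) : ℝ :=
  sSup {c : ℝ | ∃ x : H, vnormA A x = 1 ∧ c = vnormA A (T x)}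

/-- The `A`-numerical radius `ω_A(T) = sup{|⟨ATx, x⟩| : ‖x‖_A = 1}`. -/
noncomputable def wA {H : Type*} [NormedAddCommGroup H] [InnerProductSpace ℂ H]
    (A T : H →L[ℂ] H) : ℝ :=
  sSup {c : ℝ | ∃ x : H, vnormA A x = 1 ∧ c = ‖(inner ℂ (A (T x)) x : ℂ)‖}

/-- `Ts` is the reduced (Douglas) solution of `AX = T*A`, i.e. `Ts = T^{♯_A}`. -/
def IsReducedAdjoint {H : Type*} [NormedAddCommGroup H] [InnerProductSpace ℂ H]
    [CompleteSpace H] (A T Ts : H →L[ℂ] H) : Prop :=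
  A ∘L Ts = (ContinuousLinearMap.adjoint T) ∘L A ∧
    ∀ y, Ts y ∈ closure (Set.range A)

/-- The `2 × 2` operator matrix `[[P, Q], [R, S]]` acting on `H ⊕ H` (with the `ℓ²` product
inner product). -/
noncomputable def blk {H : Type*} [NormedAddCommGroup H] [InnerProductSpace ℂ H]
    (P Q R S : H →L[ℂ] H) : WithLp 2 (H × H) →L[ℂ] WithLp 2 (H × H) :=
  letI e := (WithLp.prodContinuousLinearEquiv 2 ℂ H H)
  (e.symm.toContinuousLinearMap) ∘L
    ((P.comp (fst ℂ H H) + Q.comp (snd ℂ H H)).prod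
      (R.comp (fst ℂ H H) + S.comp (snd ℂ H H))) ∘L
    (e.toContinuousLinearMap)

/-- `𝔸 = diag(A, A)` on `H ⊕ H`. -/
noncomputable def AA {H : Type*} [NormedAddCommGroup H] [InnerProductSpace ℂ H]
    (A : H →L[ℂ] H) : WithLp 2 (H × H) →L[ℂ] WithLp 2 (H × H) :=
  blk A 0 0 A

/-!
Write `a = ‖T + S‖_A` and `b = ‖T - S‖_A`. Each of `T² + S²`, `T^♯T + S^♯S` and `TT^♯ + SS^♯`
is the average `(X₊Y₊ + X₋Y₋)/2`, where `X₊, Y₊` are `T + S` or `(T + S)^♯ = T^♯ + S^♯` and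
`X₋, Y₋` are the same with `T - S`. Since `‖X^♯‖_A ≤ ‖X‖_A`, each has `A`-seminorm at most
`(a² + b²)/2 = max(a², b²) - |a² - b²|/2`.

Submultiplicativity of `‖·‖_A` needs `A`-bounded operators; every operator with an `A`-adjoint is
`A`-bounded by Reid's inequality. The seminorm is handled as `x ↦ ‖A^{1/2} x‖`.
-/

local notation "⟪" x ", " y "⟫" => @inner ℂ _ _ x y

theorem pow_two_pow_le_of_sq_le_succ {v : ℕ → ℝ} (h0 : 0 ≤ v 0)
    (h : ∀ n, v n ^ 2 ≤ v (n + 1)) (n : ℕ) : v 0 ^ 2 ^ n ≤ v n := by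
  induction n with
  | zero => simp
  | succ n ih =>
    calc v 0 ^ 2 ^ (n + 1) = (v 0 ^ 2 ^ n) ^ 2 := by rw [pow_succ, pow_mul]
      _ ≤ v n ^ 2 := pow_le_pow_left₀ (by positivity) ih 2
      _ ≤ v (n + 1) := h n

theorem le_of_forall_pow_two_pow_le_mul {a b K : ℝ} (hb : 0 ≤ b)
    (h : ∀ n : ℕ, a ^ 2 ^ n ≤ K * b ^ 2 ^ n) : a ≤ b := by
  by_contra! hba
  rcases hb.eq_or_lt with rfl | hb
  · have := h 0
    simp only [pow_zero, pow_one, zero_pow one_ne_zero, mul_zero] at this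
    linarith
  · have hr : 1 < a / b := (one_lt_div hb).2 hba
    obtain ⟨n, hn⟩ := pow_unbounded_of_one_lt K hr
    have : (a / b) ^ 2 ^ n ≤ K := by
      rw [div_pow, div_le_iff₀ (by positivity)]
      exact h n
    exact (hn.trans_le ((pow_le_pow_right₀ hr.le Nat.lt_two_pow_self.le).trans this)).false

section ASeminorm

variable {H : Type*} [NormedAddCommGroup H] [InnerProductSpace ℂ H] {A : H →L[ℂ] H}

theorem vnormA_nonneg (A : H →L[ℂ] H) (x : H) : 0 ≤ vnormA A x := Real.sqrt_nonneg _

theorem vnormA_sq (hA : A.IsPositive) (x : H) : vnormA A x ^ 2 = RCLike.re ⟪A x, x⟫ :=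
  Real.sq_sqrt (hA.2 x)

theorem opNormA_nonneg (A X : H →L[ℂ] H) : 0 ≤ opNormA A X :=
  Real.sSup_nonneg (by rintro r ⟨x, -, rfl⟩; exact vnormA_nonneg A _)

theorem opNormA_le_of_forall {X : H →L[ℂ] H} {c : ℝ} (hc : 0 ≤ c)
    (h : ∀ x, vnormA A (X x) ≤ c * vnormA A x) : opNormA A X ≤ c :=
  Real.sSup_le (by rintro r ⟨x, hx, rfl⟩; simpa [hx] using h x) hc

variable [CompleteSpace H]

theorem inner_apply_eq_inner_sqrt (hA : A.IsPositive) (x y : H) :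
    ⟪A x, y⟫ = ⟪CFC.sqrt A x, CFC.sqrt A y⟫ := by
  have hW : IsSelfAdjoint (CFC.sqrt A) := IsSelfAdjoint.of_nonneg (CFC.sqrt_nonneg A)
  conv_lhs => rw [← CFC.sqrt_mul_sqrt_self A ((nonneg_iff_isPositive A).2 hA)]
  rw [mul_apply_eq_comp, ← hW.adjoint_eq, adjoint_inner_left, hW.adjoint_eq]

theorem vnormA_eq_norm_sqrt (hA : A.IsPositive) (x : H) : vnormA A x = ‖CFC.sqrt A x‖ := by
  rw [vnormA, inner_apply_eq_inner_sqrt hA, inner_self_eq_norm_sq, Real.sqrt_sq (norm_nonneg _)]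

theorem re_inner_le_vnormA_mul (hA : A.IsPositive) (x y : H) :
    RCLike.re ⟪A x, y⟫ ≤ vnormA A x * vnormA A y := by
  rw [inner_apply_eq_inner_sqrt hA, vnormA_eq_norm_sqrt hA, vnormA_eq_norm_sqrt hA]
  exact re_inner_le_norm _ _

theorem vnormA_add_le (hA : A.IsPositive) (x y : H) :
    vnormA A (x + y) ≤ vnormA A x + vnormA A y := by
  simp only [vnormA_eq_norm_sqrt hA, map_add]
  exact norm_add_le _ _

theorem vnormA_smul (hA : A.IsPositive) (c : ℂ) (x : H) :
    vnormA A (c • x) = ‖c‖ * vnormA A x := by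
  simp only [vnormA_eq_norm_sqrt hA, map_smul, norm_smul]

theorem vnormA_le_norm_mul (hA : A.IsPositive) (x : H) :
    vnormA A x ≤ ‖CFC.sqrt A‖ * ‖x‖ := by
  rw [vnormA_eq_norm_sqrt hA]
  exact le_opNorm _ _

theorem vnormA_apply_le_opNormA (hA : A.IsPositive) {X : H →L[ℂ] H} (hX : ABounded A X)
    (x : H) : vnormA A (X x) ≤ opNormA A X * vnormA A x := by
  obtain ⟨c, -, hc⟩ := hX
  rcases (vnormA_nonneg A x).eq_or_lt with h0 | h0
  · simpa [← h0] using hc x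
  generalize ht : vnormA A x = t at h0 ⊢
  have hnorm : ‖((t⁻¹ : ℝ) : ℂ)‖ = t⁻¹ := by
    rw [Complex.norm_real, Real.norm_eq_abs, abs_of_pos (inv_pos.2 h0)]
  have hunit : vnormA A (((t⁻¹ : ℝ) : ℂ) • x) = 1 := by
    rw [vnormA_smul hA, hnorm, ht, inv_mul_cancel₀ h0.ne']
  have hbdd : BddAbove {r : ℝ | ∃ z : H, vnormA A z = 1 ∧ r = vnormA A (X z)} :=
    ⟨c, by rintro r ⟨z, hz, rfl⟩; simpa [hz] using hc z⟩
  have hle : vnormA A (X (((t⁻¹ : ℝ) : ℂ) • x)) ≤ opNormA A X := le_csSup hbdd ⟨_, hunit, rfl⟩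
  rwa [map_smul, vnormA_smul hA, hnorm, inv_mul_le_iff₀ h0, mul_comm] at hle

end ASeminorm

section AAdjoint

variable {H : Type*} [NormedAddCommGroup H] [InnerProductSpace ℂ H] [CompleteSpace H]
  {A : H →L[ℂ] H}

/-- `Xs` is an `A`-adjoint of `X`: any solution of `A Xs = X* A`, without the range condition
of `IsReducedAdjoint`. -/
def IsAAdjoint (A X Xs : H →L[ℂ] H) : Prop :=
  A ∘L Xs = adjoint X ∘L A

namespace IsAAdjoint

variable {X Xs Y Ys : H →L[ℂ] H}

theorem symm (hA : IsSelfAdjoint A) (h : IsAAdjoint A X Xs) : IsAAdjoint A Xs X := by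
  have h' := congrArg adjoint h
  rw [adjoint_comp, adjoint_comp, adjoint_adjoint, hA.adjoint_eq] at h'
  exact h'.symm

theorem add (hX : IsAAdjoint A X Xs) (hY : IsAAdjoint A Y Ys) :
    IsAAdjoint A (X + Y) (Xs + Ys) := by
  rw [IsAAdjoint, comp_add, hX, hY, map_add, add_comp]

theorem sub (hX : IsAAdjoint A X Xs) (hY : IsAAdjoint A Y Ys) :
    IsAAdjoint A (X - Y) (Xs - Ys) := by
  rw [IsAAdjoint, comp_sub, hX, hY, map_sub, sub_comp]

theorem comp (hX : IsAAdjoint A X Xs) (hY : IsAAdjoint A Y Ys) :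
    IsAAdjoint A (X ∘L Y) (Ys ∘L Xs) := by
  rw [IsAAdjoint, ← comp_assoc, hY, comp_assoc, hX, ← comp_assoc, adjoint_comp]

theorem pow (h : IsAAdjoint A X X) (n : ℕ) : IsAAdjoint A (X ^ n) (X ^ n) := by
  induction n with
  | zero => simp only [IsAAdjoint, pow_zero, adjoint_one, ← mul_def, mul_one, one_mul]
  | succ n ih =>
    have := ih.comp h
    rwa [← mul_def, ← mul_def, ← pow_succ, ← pow_succ'] at this

theorem inner_apply (h : IsAAdjoint A X Xs) (x y : H) : ⟪A (Xs x), y⟫ = ⟪A x, X y⟫ := by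
  rw [← comp_apply, h, comp_apply, adjoint_inner_left]


/-- Reid's inequality. Cauchy–Schwarz gives `‖B^m x‖_A² ≤ ‖B^{2m} x‖_A ‖x‖_A`, hence
`(‖Bx‖_A / ‖x‖_A)^{2^n} ≤ ‖B^{2^n} x‖_A / ‖x‖_A ≤ C ‖B‖^{2^n}` for all `n`. -/
theorem vnormA_apply_le_norm_mul (hA : A.IsPositive) {B : H →L[ℂ] H} (hB : IsAAdjoint A B B)
    (x : H) : vnormA A (B x) ≤ ‖B‖ * vnormA A x := by
  set u : ℕ → ℝ := fun n => vnormA A ((B ^ 2 ^ n) x)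
  have hu0 : u 0 = vnormA A (B x) := by simp [u]
  have hstep : ∀ n, u n ^ 2 ≤ u (n + 1) * vnormA A x := fun n => calc
    u n ^ 2 = RCLike.re ⟪A ((B ^ 2 ^ (n + 1)) x), x⟫ := by
      rw [vnormA_sq hA, ← (hB.pow _).inner_apply, pow_succ, pow_mul, sq, mul_apply_eq_comp]
    _ ≤ u (n + 1) * vnormA A x := re_inner_le_vnormA_mul hA _ _
  have hbound : ∀ n, u n ≤ ‖CFC.sqrt A‖ * ‖x‖ * ‖B‖ ^ 2 ^ n := fun n => calc
    u n ≤ ‖CFC.sqrt A‖ * (‖B ^ 2 ^ n‖ * ‖x‖) :=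
      (vnormA_le_norm_mul hA _).trans (by gcongr; exact le_opNorm _ _)
    _ ≤ ‖CFC.sqrt A‖ * (‖B‖ ^ 2 ^ n * ‖x‖) := by gcongr; exact norm_pow_le' _ (by positivity)
    _ = ‖CFC.sqrt A‖ * ‖x‖ * ‖B‖ ^ 2 ^ n := by ring
  rw [← hu0]
  rcases (vnormA_nonneg A x).eq_or_lt with h0 | h0
  · have h1 := hstep 0
    rw [← h0, mul_zero] at h1 ⊢
    nlinarith
  have hv : ∀ n, (u n / vnormA A x) ^ 2 ≤ u (n + 1) / vnormA A x := fun n => by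
    rw [div_pow, sq (vnormA A x), ← div_div, div_le_div_iff_of_pos_right h0,
      div_le_iff₀ h0]
    exact hstep n
  have hratio : u 0 / vnormA A x ≤ ‖B‖ :=
    le_of_forall_pow_two_pow_le_mul (K := ‖CFC.sqrt A‖ * ‖x‖ / vnormA A x) (norm_nonneg B)
      fun n => (pow_two_pow_le_of_sq_le_succ (div_nonneg (vnormA_nonneg A _) h0.le) hv n).trans
        (by rw [div_mul_eq_mul_div, div_le_div_iff_of_pos_right h0]; exact hbound n)
  rwa [div_le_iff₀ h0] at hratio

theorem aBounded (hA : A.IsPositive) (h : IsAAdjoint A X Xs) : ABounded A X := by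
  have hB : IsAAdjoint A (Xs ∘L X) (Xs ∘L X) := (h.symm hA.isSelfAdjoint).comp h
  refine ⟨√‖Xs ∘L X‖ + 1, by positivity, fun x => ?_⟩
  have hsq : vnormA A (X x) ^ 2 ≤ (√‖Xs ∘L X‖ * vnormA A x) ^ 2 := calc
    vnormA A (X x) ^ 2 = RCLike.re ⟪A ((Xs ∘L X) x), x⟫ := by
      rw [vnormA_sq hA, comp_apply, h.inner_apply]
    _ ≤ vnormA A ((Xs ∘L X) x) * vnormA A x := re_inner_le_vnormA_mul hA _ _
    _ ≤ ‖Xs ∘L X‖ * vnormA A x * vnormA A x :=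
      mul_le_mul_of_nonneg_right (hB.vnormA_apply_le_norm_mul hA x) (vnormA_nonneg A x)
    _ = (√‖Xs ∘L X‖ * vnormA A x) ^ 2 := by
      rw [mul_pow, Real.sq_sqrt (norm_nonneg _)]; ring
  have hle := (pow_le_pow_iff_left₀ (vnormA_nonneg A _)
    (mul_nonneg (Real.sqrt_nonneg _) (vnormA_nonneg A x)) two_ne_zero).1 hsq
  nlinarith [vnormA_nonneg A x]

theorem opNormA_le (hA : A.IsPositive) (h : IsAAdjoint A X Xs) :
    opNormA A Xs ≤ opNormA A X := by
  refine opNormA_le_of_forall (opNormA_nonneg A X) fun y => ?_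
  have hsq : vnormA A (Xs y) ^ 2 ≤ opNormA A X * vnormA A y * vnormA A (Xs y) := calc
    vnormA A (Xs y) ^ 2 = RCLike.re ⟪A y, X (Xs y)⟫ := by rw [vnormA_sq hA, h.inner_apply]
    _ ≤ vnormA A y * vnormA A (X (Xs y)) := re_inner_le_vnormA_mul hA _ _
    _ ≤ vnormA A y * (opNormA A X * vnormA A (Xs y)) :=
      mul_le_mul_of_nonneg_left (vnormA_apply_le_opNormA hA (h.aBounded hA) _)
        (vnormA_nonneg A y)
    _ = opNormA A X * vnormA A y * vnormA A (Xs y) := by ring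
  nlinarith [vnormA_nonneg A (Xs y), mul_nonneg (opNormA_nonneg A X) (vnormA_nonneg A y)]

end IsAAdjoint

theorem opNormA_comp_add_comp_le (hA : A.IsPositive) {P Q P' Q' : H →L[ℂ] H}
    (hadd : ABounded A (P + Q)) (hsub : ABounded A (P - Q))
    (hadd' : ABounded A (P' + Q')) (hsub' : ABounded A (P' - Q')) :
    opNormA A (P ∘L P' + Q ∘L Q') ≤
      (opNormA A (P + Q) * opNormA A (P' + Q') + opNormA A (P - Q) * opNormA A (P' - Q')) / 2 := by
  have hpolar : P ∘L P' + Q ∘L Q' =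
      (2⁻¹ : ℂ) • ((P + Q) ∘L (P' + Q') + (P - Q) ∘L (P' - Q')) := by
    simp only [add_comp, comp_add, sub_comp, comp_sub, smul_add, smul_sub]
    module
  have hcomp {X Y : H →L[ℂ] H} (hX : ABounded A X) (hY : ABounded A Y) (x : H) :
      vnormA A (X (Y x)) ≤ opNormA A X * opNormA A Y * vnormA A x := calc
    vnormA A (X (Y x)) ≤ opNormA A X * vnormA A (Y x) := vnormA_apply_le_opNormA hA hX _
    _ ≤ opNormA A X * (opNormA A Y * vnormA A x) :=
      mul_le_mul_of_nonneg_left (vnormA_apply_le_opNormA hA hY _) (opNormA_nonneg A X)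
    _ = opNormA A X * opNormA A Y * vnormA A x := by ring
  refine opNormA_le_of_forall (div_nonneg (add_nonneg
    (mul_nonneg (opNormA_nonneg _ _) (opNormA_nonneg _ _))
    (mul_nonneg (opNormA_nonneg _ _) (opNormA_nonneg _ _))) zero_le_two) fun x => ?_
  rw [hpolar, smul_apply, vnormA_smul hA, add_apply, comp_apply, comp_apply, norm_inv,
    Complex.norm_ofNat]
  have := vnormA_add_le hA ((P + Q) ((P' + Q') x)) ((P - Q) ((P' - Q') x))
  nlinarith [hcomp hadd hadd' x, hcomp hsub hsub' x]

end AAdjoint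

theorem stmt16 {H : Type*} [NormedAddCommGroup H] [InnerProductSpace ℂ H] [CompleteSpace H]
    (A : H →L[ℂ] H) (hA : A.IsPositive)
    (T S Ts Ss : H →L[ℂ] H)
    (hT : IsReducedAdjoint A T Ts) (hS : IsReducedAdjoint A S Ss) :
    |(opNormA A (T + S)) ^ 2 - (opNormA A (T - S)) ^ 2| / 2 +
      max (opNormA A (T ∘L T + S ∘L S))
        (max (opNormA A (Ts ∘L T + Ss ∘L S)) (opNormA A (T ∘L Ts + S ∘L Ss))) ≤
    max ((opNormA A (T + S)) ^ 2) ((opNormA A (T - S)) ^ 2) := by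
  have hP : IsAAdjoint A (T + S) (Ts + Ss) := IsAAdjoint.add hT.1 hS.1
  have hM : IsAAdjoint A (T - S) (Ts - Ss) := IsAAdjoint.sub hT.1 hS.1
  have hPs := hP.symm hA.isSelfAdjoint
  have hMs := hM.symm hA.isSelfAdjoint
  have hPs_le := hP.opNormA_le hA
  have hMs_le := hM.opNormA_le hA
  have k₁ := opNormA_comp_add_comp_le hA (hP.aBounded hA) (hM.aBounded hA)
    (hP.aBounded hA) (hM.aBounded hA)
  have k₂ := opNormA_comp_add_comp_le hA (hPs.aBounded hA) (hMs.aBounded hA)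
    (hP.aBounded hA) (hM.aBounded hA)
  have k₃ := opNormA_comp_add_comp_le hA (hP.aBounded hA) (hM.aBounded hA)
    (hPs.aBounded hA) (hMs.aBounded hA)
  set a := opNormA A (T + S)
  set b := opNormA A (T - S)
  have ha : 0 ≤ a := opNormA_nonneg A (T + S)
  have hb : 0 ≤ b := opNormA_nonneg A (T - S)
  have hmax : max (opNormA A (T ∘L T + S ∘L S))
      (max (opNormA A (Ts ∘L T + Ss ∘L S)) (opNormA A (T ∘L Ts + S ∘L Ss))) ≤
      (a ^ 2 + b ^ 2) / 2 :=
    max_le (by nlinarith) (max_le (by nlinarith) (by nlinarith))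
  rcases le_total (a ^ 2) (b ^ 2) with h | h
  · rw [abs_of_nonpos (sub_nonpos.2 h), max_eq_right h]; linarith
  · rw [abs_of_nonneg (sub_nonneg.2 h), max_eq_left h]; linarith
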